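/- Let n ≥ 1 be odd, k ≥ 1 an integer, and p, q be the continuous 2π-periodic functions p(φ) = (sin^{2n-1}φ cosφ − cos^{2n-1}φ sinφ)/(sin^{2n}φ + cos^{2n}φ) and q(φ) = −sin^{n-1}φ cos^{n-1}φ (sin^{2n}φ + cos^{2n}φ)^{k-1}. Then for any constant C, the function r(φ) = (sin^{2n}φ + cos^{2n}φ)^{−1/(2n)} · (I(φ) + C)^{−1/(2nk)}, where I(φ) = 2nk∫₀^φ sin^{n-1}τ cos^{n-1}τ/(sin^{2n}τ + cos^{2n}τ)dτ, satisfies the Bernoulli differential equation r'(φ) + p(φ)r(φ) = q(φ)r(φ)^{2nk+1} on any interval where I(φ) + C > 0. -/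

import Mathlib

/-!
With `A = sin ^ (2n) + cos ^ (2n)` and `B = I + C`, the logarithmic derivative of
`r = A ^ (-1/(2n)) * B ^ (-1/(2nk))` is `-A'/(2n A) - B'/(2nk B)`. The first term is `-p`, and
since `B' = 2nk sin ^ (n-1) cos ^ (n-1) / A` the second is `-sin ^ (n-1) cos ^ (n-1) / (A B)`.
On the other side `r ^ (2nk) = A ^ (-k) * B⁻¹`, so `q r ^ (2nk) = -sin ^ (n-1) cos ^ (n-1) / (A B)`
as well.
-/

open Real intervalIntegral

lemma sin_pow_add_cos_pow_pos (n : ℕ) (x : ℝ) : 0 < sin x ^ (2 * n) + cos x ^ (2 * n) := by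
  rw [pow_mul, pow_mul]
  rcases eq_or_ne (sin x) 0 with h | h
  · have hcos : cos x ^ 2 = 1 := by simpa [h] using sin_sq_add_cos_sq x
    rw [hcos, one_pow]
    positivity
  · positivity

lemma hasDerivAt_sin_pow_add_cos_pow (n : ℕ) (x : ℝ) :
    HasDerivAt (fun y => sin y ^ (2 * n) + cos y ^ (2 * n))
      (2 * n * (sin x ^ (2 * n - 1) * cos x - cos x ^ (2 * n - 1) * sin x)) x := by
  refine (((hasDerivAt_sin x).pow (2 * n)).add ((hasDerivAt_cos x).pow (2 * n))).congr_deriv ?_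
  push_cast
  ring

lemma HasDerivAt.rpow_const_mul_rpow_const {f g : ℝ → ℝ} {f' g' x : ℝ} (α β : ℝ)
    (hf : HasDerivAt f f' x) (hg : HasDerivAt g g' x) (hfx : 0 < f x) (hgx : 0 < g x) :
    HasDerivAt (fun y => f y ^ α * g y ^ β)
      (f x ^ α * g x ^ β * (α * f' / f x + β * g' / g x)) x := by
  refine ((hf.rpow_const (p := α) (Or.inl hfx.ne')).mul
    (hg.rpow_const (p := β) (Or.inl hgx.ne'))).congr_deriv ?_
  rw [rpow_sub_one hfx.ne', rpow_sub_one hgx.ne']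
  field_simp

lemma rpow_neg_one_div_natCast_pow {a : ℝ} (ha : 0 ≤ a) {m : ℕ} (hm : m ≠ 0) :
    (a ^ (-1 / (m : ℝ))) ^ m = a⁻¹ := by
  rw [neg_div, one_div, rpow_neg ha, inv_pow, rpow_inv_natCast_pow ha hm]

theorem stmt_6_general (n k : ℕ) (hn : 1 ≤ n) (hk : 1 ≤ k)
    (p q I : ℝ → ℝ)
    (hp : ∀ φ : ℝ, p φ = (Real.sin φ ^ (2 * n - 1) * Real.cos φ -
        Real.cos φ ^ (2 * n - 1) * Real.sin φ) /
        (Real.sin φ ^ (2 * n) + Real.cos φ ^ (2 * n)))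
    (hq : ∀ φ : ℝ, q φ = -(Real.sin φ ^ (n - 1) * Real.cos φ ^ (n - 1) *
        (Real.sin φ ^ (2 * n) + Real.cos φ ^ (2 * n)) ^ (k - 1)))
    (hI : ∀ φ : ℝ, I φ = 2 * n * k * ∫ τ in (0:ℝ)..φ,
        Real.sin τ ^ (n - 1) * Real.cos τ ^ (n - 1) /
          (Real.sin τ ^ (2 * n) + Real.cos τ ^ (2 * n)))
    (C : ℝ) (r : ℝ → ℝ)
    (hr : ∀ φ : ℝ, r φ = (Real.sin φ ^ (2 * n) + Real.cos φ ^ (2 * n)) ^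
        (-(1 : ℝ) / (2 * n)) * (I φ + C) ^ (-(1 : ℝ) / (2 * n * k)))
    (φ : ℝ) (hpos : 0 < I φ + C) :
    HasDerivAt r (q φ * r φ ^ (2 * n * k + 1) - p φ * r φ) φ := by
  have hA := sin_pow_add_cos_pow_pos n φ
  have hB : HasDerivAt (fun x => I x + C) (2 * n * k *
      (sin φ ^ (n - 1) * cos φ ^ (n - 1) / (sin φ ^ (2 * n) + cos φ ^ (2 * n)))) φ := by
    have hcont : Continuous fun τ => sin τ ^ (n - 1) * cos τ ^ (n - 1) /
        (sin τ ^ (2 * n) + cos τ ^ (2 * n)) :=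
      by fun_prop (disch := exact fun x => (sin_pow_add_cos_pow_pos n x).ne')
    simp only [hI]
    exact ((hcont.integral_hasStrictDerivAt 0 φ).hasDerivAt.const_mul _).add_const C
  have hderiv := (hasDerivAt_sin_pow_add_cos_pow n φ).rpow_const_mul_rpow_const
    (-1 / (2 * n)) (-1 / (2 * n * k)) hB hA hpos
  rw [show r = _ from funext hr]
  convert hderiv using 1
  rw [hp, hq]
  set A := sin φ ^ (2 * n) + cos φ ^ (2 * n)
  set B := I φ + C
  have hApow : (A ^ (-1 / (2 * n : ℝ))) ^ (2 * n * k) = (A⁻¹) ^ k := by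
    rw [pow_mul, ← rpow_neg_one_div_natCast_pow hA.le (by omega : 2 * n ≠ 0)]
    push_cast; rfl
  have hBpow : (B ^ (-1 / (2 * n * k : ℝ))) ^ (2 * n * k) = B⁻¹ := by
    rw [← rpow_neg_one_div_natCast_pow hpos.le (by positivity : 2 * n * k ≠ 0)]
    push_cast; rfl
  have hAk : (A⁻¹) ^ k = A⁻¹ / A ^ (k - 1) := by
    obtain ⟨m, rfl⟩ : ∃ m, k = m + 1 := ⟨k - 1, by omega⟩
    rw [Nat.add_sub_cancel, inv_pow, pow_succ]
    field_simp
  rw [pow_succ, mul_pow, hApow, hBpow, hAk]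
  field_simp
  ring

theorem stmt_6 (n k : ℕ) (hn : 1 ≤ n) (hodd : Odd n) (hk : 1 ≤ k)
    (p q I : ℝ → ℝ)
    (hp : ∀ φ : ℝ, p φ = (Real.sin φ ^ (2 * n - 1) * Real.cos φ -
        Real.cos φ ^ (2 * n - 1) * Real.sin φ) /
        (Real.sin φ ^ (2 * n) + Real.cos φ ^ (2 * n)))
    (hq : ∀ φ : ℝ, q φ = -(Real.sin φ ^ (n - 1) * Real.cos φ ^ (n - 1) *
        (Real.sin φ ^ (2 * n) + Real.cos φ ^ (2 * n)) ^ (k - 1)))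
    (hI : ∀ φ : ℝ, I φ = 2 * n * k * ∫ τ in (0:ℝ)..φ,
        Real.sin τ ^ (n - 1) * Real.cos τ ^ (n - 1) /
          (Real.sin τ ^ (2 * n) + Real.cos τ ^ (2 * n)))
    (C : ℝ) (r : ℝ → ℝ)
    (hr : ∀ φ : ℝ, r φ = (Real.sin φ ^ (2 * n) + Real.cos φ ^ (2 * n)) ^
        (-(1 : ℝ) / (2 * n)) * (I φ + C) ^ (-(1 : ℝ) / (2 * n * k)))
    (φ : ℝ) (hpos : 0 < I φ + C) :
    HasDerivAt r (q φ * r φ ^ (2 * n * k + 1) - p φ * r φ) φ :=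
  stmt_6_general n k hn hk p q I hp hq hI C r hr φ hpos
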